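/- Case k = 3 of the tree puzzle: for all positive integers n, p_1, p_2, p_3, the number of triples ((i,j),(R_1,…,R_n)) with i,j ∈ [n] and (R_1,…,R_n) ∈ M^n_{p_1,p_2,p_3} such that the graph α((i,j),(R_1,…,R_n)) on the three vertices {1,2,3} is a tree equals n^2 times the number of tuples (R_1,…,R_n) ∈ M^n_{p_1,p_2,p_3} with |R_1| = 2. -/

import Mathlib

open Finset

/-- A `(p 0, …, p (k-1))`-colored factorization of the cycle `(1,2,…,n)` (encoded as
`finRotate n` on `Fin n`): permutations `π t` whose product (in order) is the long cycle,
together with surjective colorings `φ t : Fin n → Fin (p t)` constant on cycles of `π t`. -/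
def IsColoredFact {n k : ℕ} (p : Fin k → ℕ)
    (x : (Fin k → Equiv.Perm (Fin n)) × ((t : Fin k) → Fin n → Fin (p t))) : Prop :=
  (List.ofFn x.1).prod = finRotate n ∧
  (∀ t, Function.Surjective (x.2 t)) ∧
  ∀ t a b, (x.1 t).SameCycle a b → x.2 t a = x.2 t b

/-- `C^n_{p_1,…,p_k}`: the number of colored factorizations. -/
noncomputable def Ccard (n k : ℕ) (p : Fin k → ℕ) : ℕ :=
  Nat.card {x : (Fin k → Equiv.Perm (Fin n)) × ((t : Fin k) → Fin n → Fin (p t)) //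
    IsColoredFact p x}

/-- Membership in `M^n_{p_1,…,p_k}`: a tuple of strict subsets of `Fin k` such that each
`t` lies in exactly `p t` of the subsets. -/
def InM {k n : ℕ} (p : Fin k → ℕ) (R : Fin n → Finset (Fin k)) : Prop :=
  (∀ i, R i ≠ Finset.univ) ∧ ∀ t, (Finset.univ.filter fun i => t ∈ R i).card = p t

/-- `M^m_{p_1,…,p_k}`: the number of such tuples. -/
noncomputable def Mcard (k m : ℕ) (p : Fin k → ℕ) : ℕ :=
  Nat.card {R : Fin m → Finset (Fin k) // InM p R}

/-- The map `α(t,R)` (vertices of `[k]` are `0`-indexed as `Fin k`): `α(t,R) = t-1` if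
`t ∈ R`, and `α(t,R) = t+r` where `r ≥ 0` is largest with `t+1,…,t+r ∈ R` otherwise. -/
def alpha {k : ℕ} [NeZero k] (t : Fin k) (R : Finset (Fin k)) : Fin k :=
  if t ∈ R then t - 1
  else t + Fin.ofNat k (Nat.findGreatest (fun r => ∀ s ∈ Finset.Icc 1 r, t + Fin.ofNat k s ∈ R) (k - 1) : ℕ)

/-- The edges `e_t = {t, α(t, R_{i_t})}`, `t` ranging over the first `k-1` vertices. -/
def treeEdges {k n : ℕ} [NeZero k] (idx : Fin (k - 1) → Fin n) (R : Fin n → Finset (Fin k))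
    (t : Fin (k - 1)) : Sym2 (Fin k) :=
  s(Fin.castLE (Nat.sub_le k 1) t, alpha (Fin.castLE (Nat.sub_le k 1) t) (R (idx t)))

/-- The graph `α((i_1,…,i_{k-1}), (R_1,…,R_n))` is a tree: its `k-1` edges are loopless,
pairwise distinct (as unordered pairs) and the resulting graph on `Fin k` is connected. -/
def IsTreeGraph {k n : ℕ} [NeZero k] (idx : Fin (k - 1) → Fin n)
    (R : Fin n → Finset (Fin k)) : Prop :=
  (∀ t : Fin (k - 1), Fin.castLE (Nat.sub_le k 1) t ≠ alpha (Fin.castLE (Nat.sub_le k 1) t) (R (idx t))) ∧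
  Function.Injective (treeEdges idx R) ∧
  (SimpleGraph.fromEdgeSet (Set.range (treeEdges idx R))).Connected

/-- The number of cycles (including fixed points) of a permutation. -/
def cycleCount {n : ℕ} (π : Equiv.Perm (Fin n)) : ℕ :=
  π.cycleType.card + (Finset.univ.filter fun a => π a = a).card

/-- Colored factorizations with prescribed color-compositions `γ`. -/
noncomputable def cColoredCard (n k : ℕ) (p : Fin k → ℕ) (γ : (t : Fin k) → Fin (p t) → ℕ) : ℕ :=
  Nat.card {x : (Fin k → Equiv.Perm (Fin n)) × ((t : Fin k) → Fin n → Fin (p t)) //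
    IsColoredFact p x ∧ ∀ t i, (Finset.univ.filter fun a => x.2 t a = i).card = γ t i}

/-- `N_{A×B}`: number of triples `(i,j,R)` with `R ∈ M^n_{p_1,p_2,p_3}`, `A ⊆ R i`, `B ⊆ R j`. -/
noncomputable def Ncard (n : ℕ) (p : Fin 3 → ℕ) (A B : Finset (Fin 3)) : ℕ :=
  Nat.card {x : Fin n × Fin n × (Fin n → Finset (Fin 3)) //
    InM p x.2.2 ∧ A ⊆ x.2.2 x.1 ∧ B ⊆ x.2.2 x.2.1}

/-! Fix the indices `(i, j)`. Unwinding `α` on `Fin 3`, the tree condition only involves the pair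
`(a, b) = (R i, R j)`, and membership in `M` only involves the strictness of each `R x` and the
multiset sum `∑ x, R x`. Among pairs of strict subsets, the trees with `|a| ≠ 2` are the six pairs
`({0}, b)` with `b ∉ {∅, {0}}` and `({1}, {2})`, while the non-trees with `|a| = 2` are the six
pairs `(a, ∅)` and `(a, {0})`. Matching these two families so that the multiset `a + b` is preserved
and replacing `(R i, R j)` by its partner is an involution of `M` carrying trees to tuples with
`|R i| = 2` when `i ≠ j`; when `i = j` the tree condition on `(a, a)` is just `|a| = 2`. Permuting
coordinates moves `i` to the first index, and the `n ^ 2` choices of `(i, j)` give the factor. -/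

open Function SimpleGraph

theorem SimpleGraph.connected_of_adj_of_adj {V : Type*} {G : SimpleGraph V} {x y z : V}
    (hxy : G.Adj x y) (hyz : G.Adj y z) (hV : ∀ w, w = x ∨ w = y ∨ w = z) : G.Connected := by
  rw [connected_iff_exists_forall_reachable]
  refine ⟨y, fun w => ?_⟩
  rcases hV w with rfl | rfl | rfl
  exacts [hxy.symm.reachable, .refl _, hyz.reachable]

theorem connected_fromEdgeSet_fin_three {s : Set (Sym2 (Fin 3))} {e f : Sym2 (Fin 3)}
    (he : e ∈ s) (hf : f ∈ s) (he' : ¬e.IsDiag) (hf' : ¬f.IsDiag) (hef : e ≠ f) :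
    (fromEdgeSet s).Connected := by
  induction e using Sym2.ind with | _ a b => ?_
  induction f using Sym2.ind with | _ c d => ?_
  have path : ∀ a b c d : Fin 3, a ≠ b → c ≠ d → s(a, b) ≠ s(c, d) →
      ∃ x y z : Fin 3, s(a, b) = s(x, y) ∧ s(c, d) = s(y, z) ∧ ∀ w, w = x ∨ w = y ∨ w = z := by
    decide
  obtain ⟨x, y, z, hab, hcd, hV⟩ :=
    path a b c d (Sym2.mk_isDiag_iff.not.1 he') (Sym2.mk_isDiag_iff.not.1 hf') hef
  rw [hab] at he he'
  rw [hcd] at hf hf'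
  exact connected_of_adj_of_adj ((fromEdgeSet_adj s).2 ⟨he, Sym2.mk_isDiag_iff.not.1 he'⟩)
    ((fromEdgeSet_adj s).2 ⟨hf, Sym2.mk_isDiag_iff.not.1 hf'⟩) hV

def IsTreePair (a b : Finset (Fin 3)) : Prop :=
  (0 : Fin 3) ≠ alpha 0 a ∧ (1 : Fin 3) ≠ alpha 1 b ∧ s((0 : Fin 3), alpha 0 a) ≠ s(1, alpha 1 b)

instance : DecidableRel IsTreePair := fun _ _ => inferInstanceAs (Decidable (_ ∧ _ ∧ _))

theorem isTreeGraph_iff_isTreePair {n : ℕ} (idx : Fin 2 → Fin n) (R : Fin n → Finset (Fin 3)) :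
    IsTreeGraph idx R ↔ IsTreePair (R (idx 0)) (R (idx 1)) := by
  have e0 : treeEdges idx R 0 = s(0, alpha 0 (R (idx 0))) := rfl
  have e1 : treeEdges idx R 1 = s(1, alpha 1 (R (idx 1))) := rfl
  constructor
  · rintro ⟨hloop, hinj, -⟩
    exact ⟨hloop 0, hloop 1, fun h => zero_ne_one (hinj (e0.trans (h.trans e1.symm)))⟩
  · rintro ⟨h0, h1, h01⟩
    refine ⟨Fin.forall_fin_two.2 ⟨h0, h1⟩, ?_, ?_⟩
    · intro s t hst
      fin_cases s <;> fin_cases t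
      exacts [rfl, absurd hst h01, absurd hst.symm h01, rfl]
    · exact connected_fromEdgeSet_fin_three ⟨0, e0⟩ ⟨1, e1⟩ (Sym2.mk_isDiag_iff.not.2 h0)
        (Sym2.mk_isDiag_iff.not.2 h1) h01

def treeMatching : Equiv.Perm (Finset (Fin 3) × Finset (Fin 3)) :=
  Equiv.swap ({0}, {1}) ({0, 1}, ∅) * Equiv.swap ({0}, {2}) ({0, 2}, ∅) *
    Equiv.swap ({1}, {2}) ({1, 2}, ∅) * Equiv.swap ({0}, {0, 1}) ({0, 1}, {0}) *
    Equiv.swap ({0}, {0, 2}) ({0, 2}, {0}) * Equiv.swap ({0}, {1, 2}) ({1, 2}, {0})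

theorem treeMatching_involutive : Involutive treeMatching := by
  unfold Involutive
  decide

theorem treeMatching_val_add (x : Finset (Fin 3) × Finset (Fin 3)) :
    (treeMatching x).1.val + (treeMatching x).2.val = x.1.val + x.2.val := by
  have count_eq : ∀ x t, Multiset.count t ((treeMatching x).1.val + (treeMatching x).2.val) =
      Multiset.count t (x.1.val + x.2.val) := by
    decide
  exact Multiset.ext.2 (count_eq x)

theorem treeMatching_ne_univ : ∀ x : Finset (Fin 3) × Finset (Fin 3), x.1 ≠ univ → x.2 ≠ univ →
    (treeMatching x).1 ≠ univ ∧ (treeMatching x).2 ≠ univ := by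
  decide

theorem isTreePair_iff_card_treeMatching_fst : ∀ a b, a ≠ univ → b ≠ univ →
    (IsTreePair a b ↔ #(treeMatching (a, b)).1 = 2) := by
  decide

theorem isTreePair_self_iff : ∀ a, a ≠ univ → (IsTreePair a a ↔ #a = 2) := by
  decide

section PairUpdate

variable {ι β : Type*} [DecidableEq ι] (g : β × β → β × β) {i j : ι}

def pairUpdate (i j : ι) (R : ι → β) : ι → β :=
  update (update R i (g (R i, R j)).1) j (g (R i, R j)).2

variable {g} {R : ι → β}

theorem pairUpdate_apply_left (hij : i ≠ j) : pairUpdate g i j R i = (g (R i, R j)).1 := by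
  rw [pairUpdate, update_of_ne hij, update_self]

theorem pairUpdate_apply_right : pairUpdate g i j R j = (g (R i, R j)).2 :=
  update_self ..

theorem pairUpdate_apply_of_ne {x : ι} (hxi : x ≠ i) (hxj : x ≠ j) :
    pairUpdate g i j R x = R x := by
  rw [pairUpdate, update_of_ne hxj, update_of_ne hxi]

theorem forall_pairUpdate {P : β → Prop} (hg : ∀ x, P x.1 → P x.2 → P (g x).1 ∧ P (g x).2)
    (hR : ∀ x, P (R x)) (x : ι) : P (pairUpdate g i j R x) := by
  by_cases hxj : x = j
  · subst hxj
    rw [pairUpdate_apply_right]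
    exact (hg _ (hR i) (hR x)).2
  by_cases hxi : x = i
  · subst hxi
    rw [pairUpdate_apply_left hxj]
    exact (hg _ (hR x) (hR j)).1
  rw [pairUpdate_apply_of_ne hxi hxj]
  exact hR x

theorem Function.Involutive.pairUpdate (hg : Involutive g) (hij : i ≠ j) :
    Involutive (pairUpdate g i j) := by
  intro R
  funext x
  by_cases hxi : x = i
  · subst hxi
    rw [pairUpdate_apply_left hij, pairUpdate_apply_left hij, pairUpdate_apply_right, hg]
  by_cases hxj : x = j
  · subst hxj
    rw [pairUpdate_apply_right, pairUpdate_apply_left hij, pairUpdate_apply_right, hg]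
  rw [pairUpdate_apply_of_ne hxi hxj, pairUpdate_apply_of_ne hxi hxj]

theorem sum_pairUpdate [Fintype ι] {M : Type*} [AddCommMonoid M] {f : β → M}
    (hg : ∀ x, f (g x).1 + f (g x).2 = f x.1 + f x.2) (hij : i ≠ j) :
    ∑ x, f (pairUpdate g i j R x) = ∑ x, f (R x) := by
  have split : ∀ F : ι → M, ∑ x, F x = F i + F j + ∑ x ∈ {i, j}ᶜ, F x := fun F => by
    rw [← sum_pair hij, sum_add_sum_compl]
  rw [split, split fun x => f (R x), pairUpdate_apply_left hij, pairUpdate_apply_right, hg]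
  congr 1
  refine sum_congr rfl fun x hx => ?_
  simp only [mem_compl, mem_insert, mem_singleton, not_or] at hx
  rw [pairUpdate_apply_of_ne hx.1 hx.2]

end PairUpdate

theorem card_filter_mem_eq_count_sum {ι α : Type*} [Fintype ι] [DecidableEq α]
    (R : ι → Finset α) (t : α) : #{i | t ∈ R i} = Multiset.count t (∑ i, (R i).val) := by
  rw [card_filter, Multiset.count_sum']
  exact sum_congr rfl fun i _ => (Multiset.count_eq_of_nodup (R i).nodup).symm

section InM

variable {k n : ℕ} {p : Fin k → ℕ}

theorem InM.of_sum_val_eq {R R' : Fin n → Finset (Fin k)} (hR : InM p R)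
    (hR' : ∀ i, R' i ≠ univ) (hsum : ∑ i, (R' i).val = ∑ i, (R i).val) : InM p R' :=
  ⟨hR', fun t => by rw [card_filter_mem_eq_count_sum, hsum, ← card_filter_mem_eq_count_sum, hR.2]⟩

theorem inM_comp_equiv_iff {m : ℕ} (σ : Fin m ≃ Fin n) (R : Fin n → Finset (Fin k)) :
    InM p (R ∘ σ) ↔ InM p R :=
  and_congr (σ.surjective.forall (p := fun i => R i ≠ univ)).symm <| forall_congr' fun t => by
    have hcard : #{i | t ∈ R (σ i)} = #{i | t ∈ R i} := card_equiv σ (by simp)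
    rw [comp_def, hcard]

end InM

section TreeMatching

variable {n : ℕ} {p : Fin 3 → ℕ} {i j : Fin n}

theorem inM_pairUpdate_treeMatching (hij : i ≠ j) {R : Fin n → Finset (Fin 3)} (hR : InM p R) :
    InM p (pairUpdate treeMatching i j R) :=
  hR.of_sum_val_eq (forall_pairUpdate (P := (· ≠ univ)) treeMatching_ne_univ hR.1)
    (sum_pairUpdate treeMatching_val_add hij)

theorem inM_pairUpdate_treeMatching_iff (hij : i ≠ j) {R : Fin n → Finset (Fin 3)} :
    InM p (pairUpdate treeMatching i j R) ↔ InM p R := by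
  refine ⟨fun h => ?_, inM_pairUpdate_treeMatching hij⟩
  rw [← treeMatching_involutive.pairUpdate hij R]
  exact inM_pairUpdate_treeMatching hij h

def isTreePairEquivOfNe (hij : i ≠ j) :
    {R : Fin n → Finset (Fin 3) // InM p R ∧ IsTreePair (R i) (R j)} ≃
      {R : Fin n → Finset (Fin 3) // InM p R ∧ #(R i) = 2} :=
  (treeMatching_involutive.pairUpdate hij).toPerm.subtypeEquiv fun R => by
    rw [Involutive.coe_toPerm, inM_pairUpdate_treeMatching_iff hij, pairUpdate_apply_left hij]
    exact and_congr_right fun hR => isTreePair_iff_card_treeMatching_fst _ _ (hR.1 i) (hR.1 j)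

end TreeMatching

def isTreeGraphEquiv {n : ℕ} (p : Fin 3 → ℕ) (idx : Fin 2 → Fin n) :
    {R : Fin n → Finset (Fin 3) // InM p R ∧ IsTreeGraph idx R} ≃
      {R : Fin n → Finset (Fin 3) // InM p R ∧ #(R (idx 0)) = 2} :=
  (Equiv.subtypeEquivRight fun R => and_congr_right' (isTreeGraph_iff_isTreePair idx R)).trans <|
    if h : idx 0 = idx 1 then
      Equiv.subtypeEquivRight fun R => and_congr_right fun hR => by
        rw [← h]
        exact isTreePair_self_iff _ (hR.1 _)
    else isTreePairEquivOfNe h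

def inMCardEquiv {k n : ℕ} (p : Fin k → ℕ) (c : ℕ) (i z : Fin n) :
    {R : Fin n → Finset (Fin k) // InM p R ∧ #(R i) = c} ≃
      {R : Fin n → Finset (Fin k) // InM p R ∧ #(R z) = c} :=
  ((Equiv.swap i z).arrowCongr (Equiv.refl _)).subtypeEquiv fun R => by
    change _ ↔ InM p (R ∘ Equiv.swap i z) ∧ #(R (Equiv.swap i z z)) = c
    rw [inM_comp_equiv_iff, Equiv.swap_apply_right]

theorem tree_puzzle_k3_general (n p₁ p₂ p₃ : ℕ) (hn : 0 < n) :
    Nat.card {B : (Fin 2 → Fin n) × (Fin n → Finset (Fin 3)) //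
        InM ![p₁, p₂, p₃] B.2 ∧ IsTreeGraph B.1 B.2} =
    n ^ 2 * Nat.card {R : Fin n → Finset (Fin 3) //
        InM ![p₁, p₂, p₃] R ∧ (R ⟨0, hn⟩).card = 2} := by
  let p := ![p₁, p₂, p₃]
  have E := (Equiv.subtypeProdEquivSigmaSubtype fun idx R => InM p R ∧ IsTreeGraph idx R).trans <|
    (Equiv.sigmaCongrRight fun idx =>
      (isTreeGraphEquiv p idx).trans (inMCardEquiv p 2 (idx 0) ⟨0, hn⟩)).trans
    (Equiv.sigmaEquivProd _ _)
  rw [Nat.card_congr E, Nat.card_prod, Nat.card_fun, Nat.card_fin, Nat.card_fin]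

theorem tree_puzzle_k3 (n p₁ p₂ p₃ : ℕ) (hn : 0 < n) (hp₁ : 0 < p₁) (hp₂ : 0 < p₂) (hp₃ : 0 < p₃) :
    Nat.card {B : (Fin 2 → Fin n) × (Fin n → Finset (Fin 3)) //
        InM ![p₁, p₂, p₃] B.2 ∧ IsTreeGraph B.1 B.2} =
    n ^ 2 * Nat.card {R : Fin n → Finset (Fin 3) //
        InM ![p₁, p₂, p₃] R ∧ (R ⟨0, hn⟩).card = 2} :=
  tree_puzzle_k3_general n p₁ p₂ p₃ hn
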